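/- In the random-amplification β-encoder, for every m ≥ 1, given only the first m output bits b_1, …, b_m and only the bounds β_min ≤ β_j ≤ β_max, the input satisfies x ∈ Î_{(b_1,…,b_m)} := [Σ_{k=1}^m b_k β_max^{−k}, Σ_{k=1}^m b_k β_min^{−k} + κ β_min^{−m}]. -/

import Mathlib

open MeasureTheory Filter Set Real

/-- Orbit of the random-amplification β-encoder: `rIter βs u x n` is the iterate `x_n`,
where `x_0 = x` and `x_n = βs_n · x_{n-1} − b_n`. -/
noncomputable def rIter (βs u : ℕ → ℝ) (x : ℝ) : ℕ → ℝ
  | 0 => x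
  | n + 1 =>
      if βs (n + 1) * rIter βs u x n < u (n + 1) then βs (n + 1) * rIter βs u x n
      else βs (n + 1) * rIter βs u x n - 1

/-- The bit `b_n` produced by the random-amplification β-encoder at step `n ≥ 1`. -/
noncomputable def rBit (βs u : ℕ → ℝ) (x : ℝ) (n : ℕ) : ℝ :=
  if βs n * rIter βs u x (n - 1) < u n then 0 else 1

/-!
Since `x_n = β_n x_{n-1} - b_n`, one step of the orbit gives
`x_{n-1} = b_n / β_n + x_n / β_n`. As long as the iterates stay nonnegative, replacing `β_n` by
`β_max` (resp. `β_min`) can only decrease (resp. increase) the right-hand side, so unrolling `m`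
steps bounds `x` between `Σ b_k β_max^{-k} + x_m β_max^{-m}` and `Σ b_k β_min^{-k} + x_m β_min^{-m}`.
The interval `[0, κ]` is invariant under the encoder, because `u_n ≤ κ` and `β_max κ - 1 = κ`;
so the first remainder is `≥ 0` and the second is `≤ κ β_min^{-m}`.
-/

namespace rIter

variable {βs u : ℕ → ℝ} {x : ℝ}

theorem succ_eq (n : ℕ) :
    rIter βs u x (n + 1) = βs (n + 1) * rIter βs u x n - rBit βs u x (n + 1) := by
  simp only [rIter, rBit, Nat.add_sub_cancel]
  split_ifs <;> ring

theorem mem_Icc {B K : ℝ} (hβ : ∀ n, 1 ≤ n → βs n ∈ Icc 0 B) (hu : ∀ n, 1 ≤ n → u n ∈ Icc 1 K)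
    (hBK : B * K ≤ 1 + K) (hx : x ∈ Icc 0 K) (n : ℕ) : rIter βs u x n ∈ Icc 0 K := by
  induction n with
  | zero => exact hx
  | succ n ih =>
    obtain ⟨hβ0, hβB⟩ := hβ (n + 1) n.succ_pos
    obtain ⟨hu1, huK⟩ := hu (n + 1) n.succ_pos
    have hle : βs (n + 1) * rIter βs u x n ≤ B * K :=
      mul_le_mul hβB ih.2 ih.1 (hβ0.trans hβB)
    simp only [rIter]
    split_ifs with h
    · exact ⟨mul_nonneg hβ0 ih.1, h.le.trans huK⟩
    · push Not at h
      constructor <;> linarith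

theorem sum_div_pow_add_le {B : ℝ} (hB : 0 < B) (hβ : ∀ n, 1 ≤ n → βs n ≤ B)
    (hnonneg : ∀ n, 0 ≤ rIter βs u x n) (m : ℕ) :
    ∑ k ∈ Finset.Icc 1 m, rBit βs u x k / B ^ k + rIter βs u x m / B ^ m ≤ x := by
  induction m with
  | zero => simp [rIter]
  | succ m ih =>
    have step : rBit βs u x (m + 1) / B ^ (m + 1) + rIter βs u x (m + 1) / B ^ (m + 1)
        ≤ rIter βs u x m / B ^ m := by
      rw [← add_div, succ_eq, add_sub_cancel, pow_succ,
        div_le_div_iff₀ (by positivity) (by positivity)]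
      have := mul_le_mul_of_nonneg_right (hβ (m + 1) m.succ_pos) (hnonneg m)
      nlinarith [pow_pos hB m]
    rw [Finset.sum_Icc_succ_top (Nat.le_add_left 1 m)]
    linarith

theorem le_sum_div_pow_add {b : ℝ} (hb : 0 < b) (hβ : ∀ n, 1 ≤ n → b ≤ βs n)
    (hnonneg : ∀ n, 0 ≤ rIter βs u x n) (m : ℕ) :
    x ≤ ∑ k ∈ Finset.Icc 1 m, rBit βs u x k / b ^ k + rIter βs u x m / b ^ m := by
  induction m with
  | zero => simp [rIter]
  | succ m ih =>
    have step : rIter βs u x m / b ^ m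
        ≤ rBit βs u x (m + 1) / b ^ (m + 1) + rIter βs u x (m + 1) / b ^ (m + 1) := by
      rw [← add_div, succ_eq, add_sub_cancel, pow_succ,
        div_le_div_iff₀ (by positivity) (by positivity)]
      have := mul_le_mul_of_nonneg_right (hβ (m + 1) m.succ_pos) (hnonneg m)
      nlinarith [pow_pos hb m]
    rw [Finset.sum_Icc_succ_top (Nat.le_add_left 1 m)]
    linarith

end rIter

theorem stmt_13_general (βmin βmax : ℝ) (h1 : 1 < βmin) (h2 : βmin ≤ βmax)
    (βs u : ℕ → ℝ)
    (hβs : ∀ n, 1 ≤ n → βs n ∈ Set.Icc βmin βmax)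
    (hu : ∀ n, 1 ≤ n → u n ∈ Set.Icc (1:ℝ) (βmax - 1)⁻¹)
    (x : ℝ) (hx : x ∈ Set.Icc (0:ℝ) 1) :
    ∀ m : ℕ, 1 ≤ m →
      x ∈ Set.Icc (∑ k ∈ Finset.Icc 1 m, rBit βs u x k / βmax ^ k)
        ((∑ k ∈ Finset.Icc 1 m, rBit βs u x k / βmin ^ k) + (βmax - 1)⁻¹ / βmin ^ m) := by
  intro m _
  have hβmin : 0 < βmin := by linarith
  have hβmax_sub_pos : 0 < βmax - 1 := by linarith
  have hκ : βmax * (βmax - 1)⁻¹ = 1 + (βmax - 1)⁻¹ := by field_simp; ring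
  have hx_le : x ≤ (βmax - 1)⁻¹ := hx.2.trans ((hu 1 le_rfl).1.trans (hu 1 le_rfl).2)
  have horbit := rIter.mem_Icc (fun n hn ↦ ⟨hβmin.le.trans (hβs n hn).1, (hβs n hn).2⟩) hu
    hκ.le ⟨hx.1, hx_le⟩
  have hnonneg n := (horbit n).1
  constructor
  · have := rIter.sum_div_pow_add_le (by linarith) (fun n hn ↦ (hβs n hn).2) hnonneg m
    have : 0 ≤ rIter βs u x m / βmax ^ m := div_nonneg (hnonneg m) (pow_pos (by linarith) m).le
    linarith
  · have := rIter.le_sum_div_pow_add hβmin (fun n hn ↦ (hβs n hn).1) hnonneg m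
    have := div_le_div_of_nonneg_right (horbit m).2 (pow_pos hβmin m).le
    linarith

/-- in the random-amplification β-encoder, for every `m ≥ 1`, knowing only
the bits `b_1, …, b_m` and the bounds `β_min ≤ β_j ≤ β_max`, the input satisfies
`x ∈ Î_{(b_1,…,b_m)} = [Σ_{k=1}^m b_k β_max^{−k}, Σ_{k=1}^m b_k β_min^{−k} + κ β_min^{−m}]`. -/
theorem stmt_13 (βmin βmax : ℝ) (h1 : 1 < βmin) (h2 : βmin ≤ βmax) (h3 : βmax < 2)
    (βs u : ℕ → ℝ)
    (hβs : ∀ n, 1 ≤ n → βs n ∈ Set.Icc βmin βmax)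
    (hu : ∀ n, 1 ≤ n → u n ∈ Set.Icc (1:ℝ) (βmax - 1)⁻¹)
    (x : ℝ) (hx : x ∈ Set.Icc (0:ℝ) 1) :
    ∀ m : ℕ, 1 ≤ m →
      x ∈ Set.Icc (∑ k ∈ Finset.Icc 1 m, rBit βs u x k / βmax ^ k)
        ((∑ k ∈ Finset.Icc 1 m, rBit βs u x k / βmin ^ k) + (βmax - 1)⁻¹ / βmin ^ m) :=
  stmt_13_general βmin βmax h1 h2 βs u hβs hu x hx
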